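/- (Capelli identity, trace form.) Let X and D be the N×N matrices of multiplication and differentiation operators on the polynomial ring in variables x_i^j, and set L = XD. Let n ≥ 1 and let e ∈ Mat_N(ℂ)^{⊗n} satisfy j_k e = c_k e for scalars c_2, …, c_n ∈ ℂ, where j_k = Σ_{i=1}^{k−1} P_{ik}. Then, taking the trace over all n matrix tensor components, one has the equality in W_N: Tr_{(1…n)}( L_1 (L_2 − c_2) ⋯ (L_n − c_n) e ) = Tr_{(1…n)}( X_1 ⋯ X_n D_1 ⋯ D_n e ). -/

import Mathlib

open Matrix
open scoped Classical

noncomputable section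

/-- The Weyl algebra `W_N`: the algebra of ℂ-linear endomorphisms of the
polynomial ring `ℂ[x_i^j : 1 ≤ i,j ≤ N]`, with variables indexed by pairs `(i,j)`. -/
abbrev Wn (N : ℕ) : Type := Module.End ℂ (MvPolynomial (Fin N × Fin N) ℂ)

/-- The matrix `X = ||x_i^j||` whose `(i,j)` entry is the operator of
multiplication by the variable `x_i^j`. -/
def Xop (N : ℕ) : Matrix (Fin N) (Fin N) (Wn N) := fun i j =>
  LinearMap.mulLeft ℂ (MvPolynomial.X (i, j))

/-- The matrix `D = ||∂/∂x_j^i||` whose `(i,j)` entry is the partial derivative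
operator `∂/∂x_j^i`. -/
def Dop (N : ℕ) : Matrix (Fin N) (Fin N) (Wn N) := fun i j =>
  (MvPolynomial.pderiv (j, i)).toLinearMap

/-- For an `N×N` matrix `A` over `U`, the element `A_i` of
`Mat_N(ℂ)^{⊗n} ⊗ U` (identified with matrices over `U` indexed by `n`-tuples
of indices) acting as `A` in the `i`-th tensor factor (0-based) and as the
identity in all other factors.  (If `i` is out of range it is the identity.) -/
def tensorEmb {U : Type*} [Ring U] (N n : ℕ) (i : ℕ) (A : Matrix (Fin N) (Fin N) U) :
    Matrix (Fin n → Fin N) (Fin n → Fin N) U := fun a b =>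
  if h : i < n then
    if ∀ k : Fin n, (k : ℕ) ≠ i → a k = b k then A (a ⟨i, h⟩) (b ⟨i, h⟩) else 0
  else if a = b then 1 else 0

/-- The permutation matrix `P_{ik} ∈ Mat_N(ℂ)^{⊗n} ⊗ U` exchanging the `i`-th
and `k`-th tensor factors (0-based); for `n = 2` it has matrix elements
`P_{kl}^{mn} = δ_k^n δ_l^m`. -/
def permM {U : Type*} [Ring U] (N n : ℕ) (i k : ℕ) :
    Matrix (Fin n → Fin N) (Fin n → Fin N) U := fun a b =>
  if h : i < n ∧ k < n then
    if a = b ∘ (Equiv.swap (⟨i, h.1⟩ : Fin n) ⟨k, h.2⟩) then 1 else 0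
  else if a = b then 1 else 0

/-- The Jucys–Murphy matrix `j_k = Σ_{i=1}^{k-1} P_{ik}` (here 0-based: the
`k`-th JM matrix is the sum of `P_{ik}` over `i < k`; for `k = 0` it is `0`). -/
def jmM (N n : ℕ) (k : ℕ) : Matrix (Fin n → Fin N) (Fin n → Fin N) ℂ :=
  ∑ i ∈ Finset.range k, permM N n i k

/-! With `L_k = X_k D_k`, the Weyl relation `D_a X_b = X_b D_a + P_{ab}` (`a ≠ b`), together with
`P_{ab} D_b = D_a P_{ab}`, moves `X_k` to the left past `D_1 ⋯ D_{k-1}` at the cost of the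
Jucys–Murphy element: `X_k D_1 ⋯ D_k = D_1 ⋯ D_{k-1} (L_k − j_k)`. By induction this gives the
operator identity `X_1 ⋯ X_n D_1 ⋯ D_n = (L_1 − j_1) ⋯ (L_n − j_n)`. Since `j_k` only involves the
tensor factors `1, …, k`, it commutes with `L_l` for `l > k`, so each `j_k` can be carried to the
right onto `e`, where it acts as `c_k`. The identity therefore holds before taking the trace. -/

theorem sum_eq_sum_update_of_eq_zero {ι α M : Type*} [DecidableEq ι] [Fintype ι] [DecidableEq α]
    [Fintype α] [AddCommMonoid M] (u : ι → α) (k : ι) (f : (ι → α) → M)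
    (hf : ∀ w, (∃ j ≠ k, w j ≠ u j) → f w = 0) :
    ∑ w, f w = ∑ m, f (Function.update u k m) := by
  rw [← Finset.sum_image fun m _ m' _ h => Function.update_injective u k h]
  refine (Finset.sum_subset (Finset.subset_univ _) fun w _ hw => hf w ?_).symm
  by_contra! H
  refine hw (Finset.mem_image.2 ⟨w k, Finset.mem_univ _, funext fun j => ?_⟩)
  rcases eq_or_ne j k with rfl | hj
  · simp
  · simp [hj, H j hj]

theorem Function.eq_comp_swap_iff {ι α : Type*} [DecidableEq ι] (u v : ι → α) (a b : ι) :
    u = v ∘ Equiv.swap a b ↔ u a = v b ∧ u b = v a ∧ ∀ j, j ≠ a → j ≠ b → u j = v j := by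
  constructor
  · rintro rfl
    exact ⟨by simp, by simp, fun j ha hb => by simp [Equiv.swap_apply_of_ne_of_ne ha hb]⟩
  · rintro ⟨ha, hb, h⟩
    funext j
    rcases eq_or_ne j a with rfl | hja
    · simp [ha]
    rcases eq_or_ne j b with rfl | hjb
    · simp [hb]
    simp [Equiv.swap_apply_of_ne_of_ne hja hjb, h j hja hjb]

namespace MvPolynomial

variable {σ R : Type*}

theorem pderiv_mul_mulLeft_X [CommSemiring R] [DecidableEq σ] (p q : σ) :
    ((pderiv p).toLinearMap : Module.End R (MvPolynomial σ R)) * LinearMap.mulLeft R (X q) =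
      LinearMap.mulLeft R (X q) * (pderiv p).toLinearMap + if q = p then 1 else 0 := by
  refine LinearMap.ext fun f => ?_
  by_cases h : q = p
  · subst h; simp [add_comm]
  · simp [pderiv_X_of_ne h, h]

theorem commute_pderiv [CommRing R] (p q : σ) :
    Commute ((pderiv p).toLinearMap : Module.End R (MvPolynomial σ R)) (pderiv q).toLinearMap := by
  have h : ⁅(pderiv p : Derivation R (MvPolynomial σ R) _), pderiv q⁆ = 0 :=
    derivation_ext fun i => by
      rw [Derivation.commutator_apply]
      simp [pderiv_X, Pi.single_apply, apply_ite]
  rw [commute_iff_lie_eq, ← Derivation.commutator_coe_linear_map, h]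
  rfl

end MvPolynomial

section RingIdentities

variable {R : Type*} [Ring R]

theorem mul_prod_range_eq_prod_range_mul_sub_sum (L : R) (D Q : ℕ → R) (m : ℕ)
    (hLD : ∀ i < m, L * D i = D i * (L - Q i))
    (hQD : ∀ j i, j < i → i < m → Commute (Q j) (D i)) :
    L * ((List.range m).map D).prod =
      ((List.range m).map D).prod * (L - ∑ i ∈ Finset.range m, Q i) := by
  induction m with
  | zero => simp
  | succ m ih =>
    have hJD : Commute (∑ i ∈ Finset.range m, Q i) (D m) :=
      Commute.sum_left _ _ _ fun j hj => hQD j m (Finset.mem_range.1 hj) m.lt_succ_self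
    rw [List.range_succ, List.map_append, List.prod_append, ← mul_assoc,
      ih (fun i hi => hLD i (by omega)) (fun j i hji hi => hQD j i hji (by omega)),
      Finset.sum_range_succ]
    simp only [List.map_cons, List.map_nil, List.prod_cons, List.prod_nil, mul_one]
    calc _ = ((List.range m).map D).prod * (L * D m - (∑ i ∈ Finset.range m, Q i) * D m) := by
          rw [mul_assoc, sub_mul]
      _ = ((List.range m).map D).prod *
            (D m * (L - Q m) - D m * ∑ i ∈ Finset.range m, Q i) := by
          rw [hLD m m.lt_succ_self, hJD.eq]
      _ = _ := by noncomm_ring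

theorem prod_range_mul_prod_range_eq_prod_range_sub (X D L J : ℕ → R) (m : ℕ)
    (h : ∀ k < m, X k * ((List.range k).map D).prod * D k =
      ((List.range k).map D).prod * (L k - J k)) :
    ((List.range m).map X).prod * ((List.range m).map D).prod =
      ((List.range m).map fun k => L k - J k).prod := by
  induction m with
  | zero => simp
  | succ m ih =>
    simp only [List.range_succ, List.map_append, List.prod_append, List.map_cons, List.map_nil,
      List.prod_cons, List.prod_nil, mul_one]
    rw [← ih fun k hk => h k (by omega)]
    calc _ = ((List.range m).map X).prod *
          (X m * ((List.range m).map D).prod * D m) := by simp only [mul_assoc]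
      _ = _ := by rw [h m m.lt_succ_self, mul_assoc]

theorem list_prod_map_sub_mul_eq_of_mul_eq_smul {K ι : Type*} [CommSemiring K] [Algebra K R]
    (L J : ι → R) (c : ι → K) (E : R) (l : List ι)
    (hcomm : l.Pairwise fun i k => Commute (J i) (L k)) (hJE : ∀ k ∈ l, J k * E = c k • E) :
    (l.map fun k => L k - J k).prod * E = (l.map fun k => L k - c k • (1 : R)).prod * E := by
  induction l with
  | nil => simp
  | cons k l ih =>
    rw [List.pairwise_cons] at hcomm
    have hJP : Commute (J k) (l.map fun k => L k - c k • (1 : R)).prod :=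
      Commute.list_prod_right _ _ fun x hx => by
        obtain ⟨i, hi, rfl⟩ := List.mem_map.1 hx
        exact (hcomm.1 i hi).sub_right ((Commute.one_right _).smul_right _)
    simp only [List.map_cons, List.prod_cons, mul_assoc]
    rw [ih hcomm.2 fun i hi => hJE i (List.mem_cons_of_mem k hi), sub_mul, sub_mul]
    congr 1
    rw [← mul_assoc, hJP.eq, mul_assoc, hJE k List.mem_cons_self, mul_smul_comm, smul_mul_assoc,
      one_mul]

end RingIdentities

section TensorLegs

variable {U : Type*} [Ring U] {N n : ℕ}

theorem tensorEmb_apply (k : Fin n) (A : Matrix (Fin N) (Fin N) U) (u v : Fin n → Fin N) :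
    tensorEmb N n k A u v = if ∀ j, j ≠ k → u j = v j then A (u k) (v k) else 0 := by
  simp [tensorEmb, Fin.val_ne_iff]

theorem tensorEmb_mul_apply (k : Fin n) (A : Matrix (Fin N) (Fin N) U)
    (M : Matrix (Fin n → Fin N) (Fin n → Fin N) U) (u v : Fin n → Fin N) :
    (tensorEmb N n k A * M) u v = ∑ m, A (u k) m * M (Function.update u k m) v := by
  rw [mul_apply, sum_eq_sum_update_of_eq_zero u k]
  · simp +contextual [tensorEmb_apply]
  · rintro w ⟨j, hjk, hj⟩
    rw [tensorEmb_apply, if_neg fun h => hj (h j hjk).symm, zero_mul]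

theorem tensorEmb_mul_tensorEmb (k : Fin n) (A B : Matrix (Fin N) (Fin N) U) :
    tensorEmb N n k A * tensorEmb N n k B = tensorEmb N n k (A * B) := by
  ext u v
  rw [tensorEmb_mul_apply]
  simp +contextual [tensorEmb_apply, mul_apply]

theorem tensorEmb_mul_tensorEmb_apply_of_ne {a b : Fin n} (hab : a ≠ b)
    (A B : Matrix (Fin N) (Fin N) U) (u v : Fin n → Fin N) :
    (tensorEmb N n a A * tensorEmb N n b B) u v =
      if ∀ j, j ≠ a → j ≠ b → u j = v j then A (u a) (v a) * B (u b) (v b) else 0 := by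
  have hcond : ∀ m, (∀ j, j ≠ b → Function.update u a m j = v j) ↔
      m = v a ∧ ∀ j, j ≠ a → j ≠ b → u j = v j := by
    intro m
    refine ⟨fun h => ⟨by simpa using h a hab, fun j hja hjb => ?_⟩, ?_⟩
    · simpa [Function.update_of_ne hja] using h j hjb
    · rintro ⟨rfl, h⟩ j hjb
      rcases eq_or_ne j a with rfl | hja
      · simp
      · simpa [Function.update_of_ne hja] using h j hja hjb
  rw [tensorEmb_mul_apply]
  simp [tensorEmb_apply, hcond, Function.update_of_ne hab.symm, ite_and]

theorem tensorEmb_commute {a b : Fin n} (hab : a ≠ b) {A B : Matrix (Fin N) (Fin N) U}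
    (h : ∀ i j k l, Commute (A i j) (B k l)) :
    Commute (tensorEmb N n a A) (tensorEmb N n b B) := by
  ext u v
  rw [tensorEmb_mul_tensorEmb_apply_of_ne hab, tensorEmb_mul_tensorEmb_apply_of_ne hab.symm]
  exact if_congr ⟨fun h' j hb ha => h' j ha hb, fun h' j ha hb => h' j hb ha⟩ (h ..).eq rfl

theorem permM_apply (a b : Fin n) (u v : Fin n → Fin N) :
    permM (U := U) N n a b u v = if u = v ∘ Equiv.swap a b then 1 else 0 := by
  simp [permM]

theorem permM_mul_apply (a b : Fin n) (M : Matrix (Fin n → Fin N) (Fin n → Fin N) U)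
    (u v : Fin n → Fin N) :
    (permM (U := U) N n a b * M) u v = M (u ∘ Equiv.swap a b) v := by
  have hsymm : ∀ w : Fin n → Fin N, u = w ∘ Equiv.swap a b ↔ u ∘ Equiv.swap a b = w := fun w => by
    rw [← Equiv.eq_comp_symm, Equiv.symm_swap]
  simp [mul_apply, permM_apply, hsymm]

theorem mul_permM_apply (a b : Fin n) (M : Matrix (Fin n → Fin N) (Fin n → Fin N) U)
    (u v : Fin n → Fin N) :
    (M * permM (U := U) N n a b) u v = M u (v ∘ Equiv.swap a b) := by
  simp [mul_apply, permM_apply]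

theorem permM_mul_tensorEmb (a b c : Fin n) (A : Matrix (Fin N) (Fin N) U) :
    permM N n a b * tensorEmb N n c A = tensorEmb N n (Equiv.swap a b c) A * permM N n a b := by
  ext u v
  rw [permM_mul_apply, mul_permM_apply, tensorEmb_apply, tensorEmb_apply]
  simp only [Function.comp_apply, Equiv.swap_apply_self]
  refine if_congr ⟨fun h j hj => ?_, fun h j hj => ?_⟩ rfl rfl
  · simpa using h (Equiv.swap a b j) fun h' => hj (by rw [← h', Equiv.swap_apply_self])
  · simpa using h (Equiv.swap a b j) ((Equiv.swap a b).injective.ne hj)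

theorem permM_commute_tensorEmb {a b c : Fin n} (hca : c ≠ a) (hcb : c ≠ b)
    (A : Matrix (Fin N) (Fin N) U) : Commute (permM N n a b) (tensorEmb N n c A) := by
  have h := permM_mul_tensorEmb a b c A
  rwa [Equiv.swap_apply_of_ne_of_ne hca hcb] at h

theorem commute_sum_permM_tensorEmb {i k : ℕ} (hik : i < k) (hk : k < n)
    (A : Matrix (Fin N) (Fin N) U) :
    Commute (∑ j ∈ Finset.range i, permM N n j i) (tensorEmb N n k A) :=
  Commute.sum_left _ _ _ fun j hj =>
    permM_commute_tensorEmb (a := ⟨j, by simp at hj; omega⟩) (b := ⟨i, by omega⟩) (c := ⟨k, hk⟩)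
      (by simp at hj; simp [Fin.ext_iff]; omega) (by simp [Fin.ext_iff]; omega) A

theorem permM_map {V F : Type*} [Ring V] [FunLike F U V] [RingHomClass F U V] (f : F) (a b : ℕ) :
    (permM N n a b).map f = permM N n a b := by
  ext u v : 1
  simp only [permM, map_apply]
  split_ifs <;> simp

end TensorLegs

section Capelli

variable {N n : ℕ}

theorem Dop_mul_Xop (i j k l : Fin N) :
    Dop N i j * Xop N k l = Xop N k l * Dop N i j + if (k, l) = (j, i) then 1 else 0 :=
  MvPolynomial.pderiv_mul_mulLeft_X (j, i) (k, l)

theorem commute_Dop (i j k l : Fin N) : Commute (Dop N i j) (Dop N k l) :=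
  MvPolynomial.commute_pderiv _ _

theorem tensorEmb_Dop_mul_tensorEmb_Xop {a b : Fin n} (hab : a ≠ b) :
    tensorEmb N n a (Dop N) * tensorEmb N n b (Xop N) =
      tensorEmb N n b (Xop N) * tensorEmb N n a (Dop N) + permM N n a b := by
  refine Matrix.ext fun u v => ?_
  rw [Matrix.add_apply, tensorEmb_mul_tensorEmb_apply_of_ne hab,
    tensorEmb_mul_tensorEmb_apply_of_ne hab.symm, permM_apply, Dop_mul_Xop]
  simp only [Function.eq_comp_swap_iff]
  by_cases h : ∀ j, j ≠ a → j ≠ b → u j = v j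
  · have h' : ∀ j, j ≠ b → j ≠ a → u j = v j := fun j hb ha => h j ha hb
    rw [if_pos h, if_pos h']
    exact congrArg _ (if_congr (by rw [Prod.mk.injEq]; tauto) rfl rfl)
  · have h' : ¬∀ j, j ≠ b → j ≠ a → u j = v j := fun h' => h fun j ha hb => h' j hb ha
    simp only [if_neg h', h, and_false, if_false, add_zero]

theorem tensorEmb_XD_mul_tensorEmb_Dop {i t : Fin n} (hit : i ≠ t) :
    tensorEmb N n t (Xop N * Dop N) * tensorEmb N n i (Dop N) =
      tensorEmb N n i (Dop N) * (tensorEmb N n t (Xop N * Dop N) - permM N n i t) := by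
  have hDD : Commute (tensorEmb N n i (Dop N)) (tensorEmb N n t (Dop N)) :=
    tensorEmb_commute hit fun _ _ _ _ => commute_Dop ..
  have hXD : tensorEmb N n t (Xop N) * tensorEmb N n i (Dop N) =
      tensorEmb N n i (Dop N) * tensorEmb N n t (Xop N) - permM N n i t :=
    eq_sub_of_add_eq (tensorEmb_Dop_mul_tensorEmb_Xop hit).symm
  have hPD : permM N n i t * tensorEmb N n t (Dop N) = tensorEmb N n i (Dop N) * permM N n i t := by
    simpa using permM_mul_tensorEmb i t t (Dop N)
  rw [← tensorEmb_mul_tensorEmb, mul_assoc, ← hDD.eq, ← mul_assoc, hXD, sub_mul, hPD, mul_sub,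
    mul_assoc]

theorem tensorEmb_XD_mul_prod_Dop (t : Fin n) :
    tensorEmb N n t (Xop N * Dop N) * ((List.range t).map fun i => tensorEmb N n i (Dop N)).prod =
      ((List.range t).map fun i => tensorEmb N n i (Dop N)).prod *
        (tensorEmb N n t (Xop N * Dop N) - ∑ i ∈ Finset.range t, permM N n i t) :=
  mul_prod_range_eq_prod_range_mul_sub_sum _ _ _ t
    (fun i hi => tensorEmb_XD_mul_tensorEmb_Dop (i := ⟨i, by omega⟩) (Fin.ne_of_lt hi))
    (fun j i hji hi => permM_commute_tensorEmb (a := ⟨j, by omega⟩) (b := t) (c := ⟨i, by omega⟩)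
      (Fin.ne_of_gt hji) (Fin.ne_of_lt hi) _)

theorem prod_Xop_mul_prod_Dop :
    ((List.range n).map fun k => tensorEmb N n k (Xop N)).prod *
        ((List.range n).map fun k => tensorEmb N n k (Dop N)).prod =
      ((List.range n).map fun k => tensorEmb N n k (Xop N * Dop N) -
        ∑ i ∈ Finset.range k, permM N n i k).prod :=
  prod_range_mul_prod_range_eq_prod_range_sub _ _ _ _ n fun k hk => by
    have hDP : Commute (tensorEmb N n k (Dop N))
        ((List.range k).map fun i => tensorEmb N n i (Dop N)).prod :=
      Commute.list_prod_right _ _ fun x hx => by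
        obtain ⟨i, hi, rfl⟩ := List.mem_map.1 hx
        exact tensorEmb_commute (a := ⟨k, hk⟩) (b := ⟨i, by simp at hi; omega⟩)
          (by simp at hi; simp [Fin.ext_iff]; omega) fun _ _ _ _ => commute_Dop ..
    rw [mul_assoc, ← hDP.eq, ← mul_assoc, tensorEmb_mul_tensorEmb (⟨k, hk⟩ : Fin n)]
    exact tensorEmb_XD_mul_prod_Dop ⟨k, hk⟩

end Capelli

theorem Capelli_trace_form_general (N : ℕ) (n : ℕ)
    (e : Matrix (Fin n → Fin N) (Fin n → Fin N) ℂ) (c : ℕ → ℂ)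
    (he : ∀ k, k < n → jmM N n k * e = c k • e) :
    Matrix.trace
      (((List.range n).map (fun k =>
          tensorEmb N n k (Xop N * Dop N) -
            c k • (1 : Matrix (Fin n → Fin N) (Fin n → Fin N) (Wn N)))).prod *
        e.map (algebraMap ℂ (Wn N))) =
    Matrix.trace
      (((List.range n).map (fun k => tensorEmb N n k (Xop N))).prod *
        ((List.range n).map (fun k => tensorEmb N n k (Dop N))).prod *
          e.map (algebraMap ℂ (Wn N))) := by
  have hJE : ∀ k ∈ List.range n, (∑ i ∈ Finset.range k, permM N n i k) *
      e.map (algebraMap ℂ (Wn N)) = c k • e.map (algebraMap ℂ (Wn N)) := fun k hk => by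
    have h := congrArg (Algebra.ofId ℂ (Wn N)).mapMatrix (he k (List.mem_range.1 hk))
    rw [map_mul, map_smul, jmM, map_sum] at h
    simp only [AlgHom.mapMatrix_apply, permM_map] at h
    exact h
  have hcomm : (List.range n).Pairwise fun i k =>
      Commute (∑ j ∈ Finset.range i, permM N n j i) (tensorEmb N n k (Xop N * Dop N)) :=
    List.pairwise_lt_range.imp_of_mem fun _ hk hik =>
      commute_sum_permM_tensorEmb hik (List.mem_range.1 hk) _
  rw [← list_prod_map_sub_mul_eq_of_mul_eq_smul _ _ c _ _ hcomm hJE, prod_Xop_mul_prod_Dop]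

/-- Capelli identity, trace form: if `e ∈ Mat_N(ℂ)^{⊗n}`
satisfies `j_k e = c_k e` (with `c₁ = 0`, matching `j₁ = 0`), then taking the
trace over all `n` matrix tensor components,
`Tr( L₁(L₂ − c₂)⋯(Lₙ − cₙ) e ) = Tr( X₁⋯Xₙ D₁⋯Dₙ e )` holds in `W_N`. -/
theorem Capelli_trace_form (N : ℕ) (hN : 1 ≤ N) (n : ℕ) (hn : 1 ≤ n)
    (e : Matrix (Fin n → Fin N) (Fin n → Fin N) ℂ) (c : ℕ → ℂ) (hc0 : c 0 = 0)
    (he : ∀ k, k < n → jmM N n k * e = c k • e) :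
    Matrix.trace
      (((List.range n).map (fun k =>
          tensorEmb N n k (Xop N * Dop N) -
            c k • (1 : Matrix (Fin n → Fin N) (Fin n → Fin N) (Wn N)))).prod *
        e.map (algebraMap ℂ (Wn N))) =
    Matrix.trace
      (((List.range n).map (fun k => tensorEmb N n k (Xop N))).prod *
        ((List.range n).map (fun k => tensorEmb N n k (Dop N))).prod *
          e.map (algebraMap ℂ (Wn N))) :=
  Capelli_trace_form_general N n e c he
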